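/- Let G be a game with at least one Left option and at least one Right option, and let H be a game with H ≥ 0 in normal play. Then for any universe X of games, G:H ≥ G modulo X in misère play; that is, for every game W in X, the misère outcome of G:H + W is greater than or equal to that of G + W in the partial order P,N ≤ L and R ≤ P,N ≤ L, R ≤ P, R ≤ N. -/

import Mathlib

namespace SetTheory

universe u

/-- Pre-games (removed from Mathlib; restored with the Mathlib 2024 definitions). -/
inductive PGame : Type (u + 1)
  | mk : ∀ α β : Type u, (α → PGame) → (β → PGame) → PGame

namespace PGame

def LeftMoves : PGame → Type u
  | mk l _ _ _ => l

def RightMoves : PGame → Type u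
  | mk _ r _ _ => r

def moveLeft : ∀ g : PGame, LeftMoves g → PGame
  | mk _ _ L _ => L

def moveRight : ∀ g : PGame, RightMoves g → PGame
  | mk _ _ _ R => R

inductive IsOption : PGame → PGame → Prop
  | moveLeft {x : PGame} (i : x.LeftMoves) : IsOption (x.moveLeft i) x
  | moveRight {x : PGame} (i : x.RightMoves) : IsOption (x.moveRight i) x

def Subsequent : PGame → PGame → Prop :=
  Relation.TransGen IsOption

instance : Zero PGame :=
  ⟨⟨PEmpty, PEmpty, PEmpty.elim, PEmpty.elim⟩⟩

def star : PGame.{u} :=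
  ⟨PUnit, PUnit, fun _ => 0, fun _ => 0⟩

def neg : PGame → PGame
  | ⟨l, r, L, R⟩ => ⟨r, l, fun i => neg (R i), fun i => neg (L i)⟩

instance : Neg PGame :=
  ⟨neg⟩

def addAux (xl xr : Type u) (fL : xl → PGame → PGame) (fR : xr → PGame → PGame) :
    PGame → PGame
  | mk yl yr yL yR =>
    mk (xl ⊕ yl) (xr ⊕ yr)
      (Sum.elim (fun i => fL i (mk yl yr yL yR)) (fun j => addAux xl xr fL fR (yL j)))
      (Sum.elim (fun i => fR i (mk yl yr yL yR)) (fun j => addAux xl xr fL fR (yR j)))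

def add : PGame → PGame → PGame
  | mk xl xr xL xR => addAux xl xr (fun i => add (xL i)) (fun i => add (xR i))

instance : Add PGame :=
  ⟨add⟩

/-- The pair (`x ≤ y`, `x ⧏ y`), defined by recursion on `x` and then `y`. -/
noncomputable def leLf (x : PGame) : PGame → Prop × Prop :=
  PGame.rec (motive := fun _ => PGame → Prop × Prop)
    (fun xl xr xL xR IHxl IHxr y =>
      PGame.rec (motive := fun _ => Prop × Prop)
        (fun yl yr yL yR IHyl IHyr =>
          ((∀ i, (IHxl i (mk yl yr yL yR)).2) ∧ (∀ j, (IHyr j).2),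
           (∃ i, (IHyl i).1) ∨ (∃ j, (IHxr j (mk yl yr yL yR)).1))) y) x

noncomputable instance : LE PGame :=
  ⟨fun x y => (leLf x y).1⟩

end PGame

end SetTheory

open SetTheory

namespace Sprigs

/-- Partizan games (in the lowest universe). -/
abbrev PG : Type 1 := PGame.{0}

/-- Winning predicates moving first under misère play:
`(mw G).1` = Left wins moving first; `(mw G).2` = Right wins moving first. -/
def mw : PG → Prop × Prop
  | PGame.mk α β L R =>
    ((IsEmpty α ∨ ∃ i, ¬ (mw (L i)).2), (IsEmpty β ∨ ∃ j, ¬ (mw (R j)).1))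

/-- Winning predicates moving first under normal play. -/
def nw : PG → Prop × Prop
  | PGame.mk _ _ L R => ((∃ i, ¬ (nw (L i)).2), (∃ j, ¬ (nw (R j)).1))

/-- Outcome classes. -/
inductive Outcome : Type
  | L | R | N | P
deriving DecidableEq

/-- The outcome determined by "Left wins moving first" and "Right wins moving first". -/
noncomputable def outcomeOf (wl wr : Prop) : Outcome :=
  haveI := Classical.propDecidable wl
  haveI := Classical.propDecidable wr
  if wl then (if wr then .N else .L) else (if wr then .R else .P)

/-- Misère-play outcome. -/
noncomputable def mo (G : PG) : Outcome := outcomeOf (mw G).1 (mw G).2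

/-- Normal-play outcome. -/
noncomputable def no (G : PG) : Outcome := outcomeOf (nw G).1 (nw G).2

/-- Partial order on outcomes: R < P < L and R < N < L, with P, N incomparable. -/
def Outcome.le : Outcome → Outcome → Prop
  | .R, _ => True
  | _, .L => True
  | a, b => a = b

def Outcome.lt (a b : Outcome) : Prop := Outcome.le a b ∧ a ≠ b

/-- Dicot games: every subposition has moves for both players or neither. -/
def Dicot : PG → Prop
  | PGame.mk α β L R =>
    ((IsEmpty α ∧ IsEmpty β) ∨ (Nonempty α ∧ Nonempty β)) ∧
      (∀ i, Dicot (L i)) ∧ (∀ j, Dicot (R j))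

/-- Ordinal sum `G : H`. -/
def ordSum (G : PG) : PG → PGame
  | PGame.mk α β L R =>
    PGame.mk (G.LeftMoves ⊕ α) (G.RightMoves ⊕ β)
      (Sum.elim G.moveLeft (fun a => ordSum G (L a)))
      (Sum.elim G.moveRight (fun b => ordSum G (R b)))

/-- Canonical form of a natural number as a game. -/
def natGame : ℕ → PGame
  | 0 => PGame.mk PEmpty PEmpty PEmpty.elim PEmpty.elim
  | n + 1 => PGame.mk PUnit PEmpty (fun _ => natGame n) PEmpty.elim

/-- Canonical form of an integer as a game. -/
def intGame (m : ℤ) : PG := if 0 ≤ m then natGame m.toNat else -natGame (-m).toNat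

/-- Canonical form of the dyadic rational `m / 2 ^ n` as a game. -/
def dGame : ℕ → ℤ → PGame
  | 0, m => intGame m
  | n + 1, m =>
    if m % 2 = 0 then dGame n (m / 2)
    else PGame.mk PUnit PUnit (fun _ => dGame n ((m - 1) / 2)) (fun _ => dGame n ((m + 1) / 2))

/-- A rational number is dyadic if its denominator is a power of two. -/
def IsDyadic (q : ℚ) : Prop := ∃ n : ℕ, q.den = 2 ^ n

/-- The canonical-form game of a dyadic rational. -/
def qGame (q : ℚ) : PG := dGame (Nat.log 2 q.den) q.num

/-- The Sprig `* : x` for a dyadic rational `x`. -/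
def sprig (q : ℚ) : PG := ordSum PGame.star (qGame q)

/-- The Sprig `* : x̄` where `x̄` is the conjugate of the dyadic rational `x`. -/
def sprigNeg (q : ℚ) : PG := ordSum PGame.star (-qGame q)

/-- Disjunctive sum of a list of games. -/
def listSum (l : List PG) : PG := l.foldr (· + ·) 0

/-- The position `(X, Y) = Σ_{x ∈ X} *:x + Σ_{y ∈ Y} *:(-y)`. -/
def sprigsGame (X Y : List ℚ) : PG := listSum (X.map sprig ++ Y.map sprigNeg)

/-- The minimum of a nonempty multiset of rationals (0 for the empty multiset). -/
noncomputable def mmin (s : Multiset ℚ) : ℚ :=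
  if h : s = 0 then 0 else
    s.toFinset.min' (by rwa [Multiset.toFinset_nonempty])

/-- The edge `ε` computed from the reduced multisets `X' = X \ Y` and `Y' = Y \ X`. -/
noncomputable def edge (X Y : Multiset ℚ) : ℚ :=
  if X - Y = 0 ∨ Y - X = 0 then 0 else mmin (X - Y) - mmin (Y - X)

/-- The universe `S` of finite sums of Sprigs (and `*`). -/
inductive InS : PG → Prop
  | star : InS PGame.star
  | sprig {q : ℚ} (h : IsDyadic q) : InS (sprig q)
  | sprigNeg {q : ℚ} (h : IsDyadic q) : InS (sprigNeg q)
  | add {a b : PG} : InS a → InS b → InS (a + b)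

/-- A universe: a set of games closed under disjunctive sum and followers. -/
def IsUniverse (S : Set PG) : Prop :=
  (∀ a ∈ S, ∀ b ∈ S, a + b ∈ S) ∧ ∀ a ∈ S, ∀ b, PGame.Subsequent b a → b ∈ S

/-!
Induct on `(H, W)`. A first-player win for Left in `G + W` is one in `G:H + W`: a good move in
`G` is still available, and one in `W` works by induction. Dually, a first-player win for Right
in `G:H + W` gives one in `G + W`; the only new case is Right's move to `G:H^R + W`. Since
`H ≥ 0`, some `H^RL ≥ 0`, and Left could answer with `G:H^RL + W`, so Right wins that moving
first and induction applies. Because `G` has options on both sides, no player is out of moves in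
one of the two sums but not in the other.
-/

end Sprigs

namespace SetTheory.PGame

universe u

theorem leftMoves_add (x y : PGame) : (x + y).LeftMoves = (x.LeftMoves ⊕ y.LeftMoves) := by
  cases x; cases y; rfl

theorem rightMoves_add (x y : PGame) : (x + y).RightMoves = (x.RightMoves ⊕ y.RightMoves) := by
  cases x; cases y; rfl

def toLeftMovesAdd {x y : PGame} : x.LeftMoves ⊕ y.LeftMoves ≃ (x + y).LeftMoves :=
  Equiv.cast (leftMoves_add x y).symm

def toRightMovesAdd {x y : PGame} : x.RightMoves ⊕ y.RightMoves ≃ (x + y).RightMoves :=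
  Equiv.cast (rightMoves_add x y).symm

theorem add_moveLeft_inl {x : PGame} (y : PGame) (i : x.LeftMoves) :
    (x + y).moveLeft (toLeftMovesAdd (Sum.inl i)) = x.moveLeft i + y := by
  cases x; cases y; rfl

theorem add_moveLeft_inr (x : PGame) {y : PGame} (i : y.LeftMoves) :
    (x + y).moveLeft (toLeftMovesAdd (Sum.inr i)) = x + y.moveLeft i := by
  cases x; cases y; rfl

theorem add_moveRight_inl {x : PGame} (y : PGame) (i : x.RightMoves) :
    (x + y).moveRight (toRightMovesAdd (Sum.inl i)) = x.moveRight i + y := by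
  cases x; cases y; rfl

theorem add_moveRight_inr (x : PGame) {y : PGame} (i : y.RightMoves) :
    (x + y).moveRight (toRightMovesAdd (Sum.inr i)) = x + y.moveRight i := by
  cases x; cases y; rfl

-- `leLf` may compare games of different universes, so `0` needs its universe pinned.
theorem leLf_zero_snd_iff (y : PGame.{u}) :
    (leLf (0 : PGame.{u}) y).2 ↔ ∃ i, 0 ≤ y.moveLeft i := by
  cases y
  exact ⟨fun h => h.resolve_right fun ⟨j, _⟩ => j.elim, .inl⟩

theorem zero_le {x : PGame} : 0 ≤ x ↔ ∀ j, ∃ i, 0 ≤ (x.moveRight j).moveLeft i := by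
  cases x
  exact ⟨fun h j => (leLf_zero_snd_iff _).1 (h.2 j),
    fun h => ⟨fun i => i.elim, fun j => (leLf_zero_snd_iff _).2 (h j)⟩⟩

theorem wf_isOption : WellFounded IsOption :=
  ⟨fun x => by
    induction x with
    | mk l r L R IHl IHr =>
      exact ⟨_, fun y h => by cases h with
        | moveLeft i => exact IHl i
        | moveRight j => exact IHr j⟩⟩

theorem wf_subsequent : WellFounded Subsequent :=
  wf_isOption.transGen

instance : WellFoundedRelation PGame :=
  ⟨Subsequent, wf_subsequent⟩

theorem Subsequent.moveLeft (x : PGame) (i : x.LeftMoves) : Subsequent (x.moveLeft i) x :=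
  .single (.moveLeft i)

theorem Subsequent.moveRight (x : PGame) (j : x.RightMoves) : Subsequent (x.moveRight j) x :=
  .single (.moveRight j)

theorem Subsequent.moveRight_moveLeft (x : PGame) (j : x.RightMoves)
    (i : (x.moveRight j).LeftMoves) : Subsequent ((x.moveRight j).moveLeft i) x :=
  Relation.TransGen.tail (Subsequent.moveLeft _ i) (IsOption.moveRight j)

end SetTheory.PGame

namespace Sprigs

open PGame

theorem mw_fst_iff (x : PG) :
    (mw x).1 ↔ IsEmpty x.LeftMoves ∨ ∃ i, ¬(mw (x.moveLeft i)).2 := by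
  cases x; exact Iff.rfl

theorem mw_snd_iff (x : PG) :
    (mw x).2 ↔ IsEmpty x.RightMoves ∨ ∃ j, ¬(mw (x.moveRight j)).1 := by
  cases x; exact Iff.rfl

theorem mw_fst_add_iff (x y : PG) :
    (mw (x + y)).1 ↔ (IsEmpty x.LeftMoves ∧ IsEmpty y.LeftMoves) ∨
      (∃ i, ¬(mw (x.moveLeft i + y)).2) ∨ ∃ j, ¬(mw (x + y.moveLeft j)).2 := by
  rw [mw_fst_iff, ← toLeftMovesAdd.isEmpty_congr, isEmpty_sum,
    toLeftMovesAdd.symm.exists_congr_left, Sum.exists]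
  simp only [Equiv.symm_symm, add_moveLeft_inl, add_moveLeft_inr]

theorem mw_snd_add_iff (x y : PG) :
    (mw (x + y)).2 ↔ (IsEmpty x.RightMoves ∧ IsEmpty y.RightMoves) ∨
      (∃ i, ¬(mw (x.moveRight i + y)).1) ∨ ∃ j, ¬(mw (x + y.moveRight j)).1 := by
  rw [mw_snd_iff, ← toRightMovesAdd.isEmpty_congr, isEmpty_sum,
    toRightMovesAdd.symm.exists_congr_left, Sum.exists]
  simp only [Equiv.symm_symm, add_moveRight_inl, add_moveRight_inr]

theorem exists_ordSum_moveLeft_eq_moveLeft (G K : PG) (i : G.LeftMoves) :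
    ∃ k, (ordSum G K).moveLeft k = G.moveLeft i := by
  cases K; exact ⟨.inl i, rfl⟩

theorem exists_ordSum_moveLeft_eq_ordSum (G K : PG) (i : K.LeftMoves) :
    ∃ k, (ordSum G K).moveLeft k = ordSum G (K.moveLeft i) := by
  cases K; exact ⟨.inr i, rfl⟩

theorem ordSum_moveRight_cases (G K : PG) (k : (ordSum G K).RightMoves) :
    (∃ j, (ordSum G K).moveRight k = G.moveRight j) ∨
      ∃ j, (ordSum G K).moveRight k = ordSum G (K.moveRight j) := by
  cases K
  rcases k with j | j
  exacts [.inl ⟨j, rfl⟩, .inr ⟨j, rfl⟩]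

theorem ordSum_rightMoves_nonempty (G K : PG) (hG : Nonempty G.RightMoves) :
    Nonempty (ordSum G K).RightMoves := by
  cases K; exact ⟨.inl hG.some⟩

mutual

theorem mw_fst_ordSum_add_of_mw_fst_add {G : PG} (hGL : Nonempty G.LeftMoves)
    (hGR : Nonempty G.RightMoves) {H : PG} (hH : 0 ≤ H) (W : PG) :
    (mw (G + W)).1 → (mw (ordSum G H + W)).1 := by
  rw [mw_fst_add_iff, mw_fst_add_iff]
  rintro (⟨hG, -⟩ | ⟨i, hi⟩ | ⟨j, hj⟩)
  · exact hG.elim hGL.some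
  · obtain ⟨k, hk⟩ := exists_ordSum_moveLeft_eq_moveLeft G H i
    exact .inr (.inl ⟨k, hk ▸ hi⟩)
  · exact .inr (.inr ⟨j, mt (mw_snd_add_of_mw_snd_ordSum_add hGL hGR hH (W.moveLeft j)) hj⟩)
termination_by (H, W)
decreasing_by exact Prod.Lex.right _ (Subsequent.moveLeft W j)

theorem mw_snd_add_of_mw_snd_ordSum_add {G : PG} (hGL : Nonempty G.LeftMoves)
    (hGR : Nonempty G.RightMoves) {H : PG} (hH : 0 ≤ H) (W : PG) :
    (mw (ordSum G H + W)).2 → (mw (G + W)).2 := by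
  rw [mw_snd_add_iff, mw_snd_add_iff]
  rintro (⟨hG, -⟩ | ⟨k, hk⟩ | ⟨j, hj⟩)
  · exact hG.elim (ordSum_rightMoves_nonempty G H hGR).some
  · rcases ordSum_moveRight_cases G H k with ⟨j, hj⟩ | ⟨j, hj⟩
    · exact .inr (.inl ⟨j, hj ▸ hk⟩)
    · obtain ⟨i, hi⟩ := zero_le.1 hH j
      have hLeft : (mw (ordSum G ((H.moveRight j).moveLeft i) + W)).2 := by
        by_contra h
        obtain ⟨k', hk'⟩ := exists_ordSum_moveLeft_eq_ordSum G (H.moveRight j) i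
        exact hk (hj ▸ (mw_fst_add_iff _ _).2 (.inr (.inl ⟨k', hk' ▸ h⟩)))
      exact (mw_snd_add_iff _ _).1 (mw_snd_add_of_mw_snd_ordSum_add hGL hGR hi W hLeft)
  · exact .inr (.inr ⟨j, mt (mw_fst_ordSum_add_of_mw_fst_add hGL hGR hH (W.moveRight j)) hj⟩)
termination_by (H, W)
decreasing_by
  · exact Prod.Lex.left _ _ (Subsequent.moveRight_moveLeft H j i)
  · exact Prod.Lex.right _ (Subsequent.moveRight W j)

end

theorem outcomeOf_le_outcomeOf {a b c d : Prop} (hac : a → c) (hdb : d → b) :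
    Outcome.le (outcomeOf a b) (outcomeOf c d) := by
  unfold outcomeOf
  by_cases a <;> by_cases b <;> by_cases c <;> by_cases d <;> simp_all [Outcome.le]

/-- If `G` has Left and Right options and `H ≥ 0` in normal play, then
`G:H ≥ G` modulo any universe `𝒳` in misère play. -/
theorem stmt5 (G H : PG) (hGL : Nonempty G.LeftMoves) (hGR : Nonempty G.RightMoves)
    (hH : 0 ≤ H) (𝒳 : Set PG) :
    ∀ W ∈ 𝒳, Outcome.le (mo (G + W)) (mo (ordSum G H + W)) := fun W _ =>
  outcomeOf_le_outcomeOf (mw_fst_ordSum_add_of_mw_fst_add hGL hGR hH W)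
    (mw_snd_add_of_mw_snd_ordSum_add hGL hGR hH W)

end Sprigs
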